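/- Under the same hypotheses, the bracket {u,v}' = (-1)^{deg(u)(|v|+deg(v))}[u,v] also defines a Z/2×Z-graded Lie algebra structure with respect to the form ⟨(m̄,n),(m̄',n')⟩ = (m̄+n)(m̄'+n'). -/

import Mathlib

/-- `(-1)^a` for `a : ZMod 2`. -/
def pSign (k : Type*) [CommRing k] (a : ZMod 2) : k := (-1 : k) ^ a.val

/-!
The new bracket is the old one twisted by the sign `(-1)^{ε(a,b)}` of the biadditive form
`ε(a,b) = deg(a) (|b| + deg(b))` on degrees. Twisting a graded Lie bracket with commutation
factor `(-1)^{χ(a,b)}` by any 2-cocycle `ε` gives a graded Lie bracket with commutation factor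
`(-1)^{χ(a,b) + ε(a,b) + ε(b,a)}`: the cocycle identity makes the signs in front of the first two
Jacobi terms agree, and applied to `(b,a,c)` it does the same for the third. Here
`āb̄ + ab + a(b̄ + b) + b(ā + a) = (ā + a)(b̄ + b)` in `ZMod 2`.
-/

section Twist

variable {k L Γ : Type*} [CommRing k] [AddCommGroup L] [Module k L]

theorem pSign_add (a b : ZMod 2) : pSign k (a + b) = pSign k a * pSign k b := by
  rw [pSign, pSign, pSign, ZMod.val_add, ← pow_add, ← neg_one_pow_eq_pow_mod_two]

theorem pSign_smul_pSign_smul (a b : ZMod 2) (v : L) :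
    pSign k a • pSign k b • v = pSign k (a + b) • v := by
  rw [smul_smul, pSign_add]

theorem twist_antisymm {u v : L} {ε : Γ → Γ → ZMod 2} {a b : Γ} {s t : ZMod 2}
    (h : u = -pSign k s • v) (ht : s + ε a b + ε b a = t) :
    pSign k (ε a b) • u = -pSign k t • pSign k (ε b a) • v := by
  rw [h, ← ht, neg_smul, neg_smul, smul_neg, pSign_smul_pSign_smul, pSign_smul_pSign_smul,
    CharTwo.add_cancel_right, add_comm]

theorem twist_jacobi [AddCommMonoid Γ] {u v w : L} {ε : Γ → Γ → ZMod 2}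
    (hε : ∀ a b c, ε (a + b) c + ε a b = ε a (b + c) + ε b c) {a b c : Γ} {s t : ZMod 2}
    (h : u = v - pSign k s • w) (ht : s + ε a b + ε b a = t) :
    pSign k (ε (a + b) c) • pSign k (ε a b) • u
      = pSign k (ε a (b + c)) • pSign k (ε b c) • v
        - pSign k t • pSign k (ε b (a + c)) • pSign k (ε a c) • w := by
  have hw : ε (a + b) c + (ε a b + s) = t + (ε b (a + c) + ε a c) := by
    rw [← ht, ← hε b a c, add_comm b a]
    grind
  simp only [h, smul_sub, pSign_smul_pSign_smul]
  rw [hw, hε a b c]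

end Twist

theorem second_modified_bracket_graded_lie_general {k L : Type*} [Field k]
    [AddCommGroup L] [Module k L]
    (𝕃 : ZMod 2 × ℤ → Submodule k L)
    (B : L →ₗ[k] L →ₗ[k] L)
    (hanti : ∀ a b : ZMod 2 × ℤ, ∀ x ∈ 𝕃 a, ∀ y ∈ 𝕃 b,
      B x y = - pSign k (a.1 * b.1 + ((a.2 * b.2 : ℤ) : ZMod 2)) • B y x)
    (hjac : ∀ a b c : ZMod 2 × ℤ, ∀ x ∈ 𝕃 a, ∀ y ∈ 𝕃 b, ∀ z ∈ 𝕃 c,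
      B (B x y) z = B x (B y z)
        - pSign k (a.1 * b.1 + ((a.2 * b.2 : ℤ) : ZMod 2)) • B y (B x z)) :
    (∀ a b : ZMod 2 × ℤ, ∀ x ∈ 𝕃 a, ∀ y ∈ 𝕃 b,
      pSign k ((a.2 : ZMod 2) * (b.1 + (b.2 : ZMod 2))) • B x y
        = - pSign k ((a.1 + (a.2 : ZMod 2)) * (b.1 + (b.2 : ZMod 2))) •
            (pSign k ((b.2 : ZMod 2) * (a.1 + (a.2 : ZMod 2))) • B y x)) ∧
    (∀ a b c : ZMod 2 × ℤ, ∀ x ∈ 𝕃 a, ∀ y ∈ 𝕃 b, ∀ z ∈ 𝕃 c,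
      pSign k (((a + b).2 : ZMod 2) * (c.1 + (c.2 : ZMod 2))) •
          B (pSign k ((a.2 : ZMod 2) * (b.1 + (b.2 : ZMod 2))) • B x y) z
        = pSign k ((a.2 : ZMod 2) * ((b + c).1 + ((b + c).2 : ZMod 2))) •
            B x (pSign k ((b.2 : ZMod 2) * (c.1 + (c.2 : ZMod 2))) • B y z)
          - pSign k ((a.1 + (a.2 : ZMod 2)) * (b.1 + (b.2 : ZMod 2))) •
            (pSign k ((b.2 : ZMod 2) * ((a + c).1 + ((a + c).2 : ZMod 2))) •
              B y (pSign k ((a.2 : ZMod 2) * (c.1 + (c.2 : ZMod 2))) • B x z))) := by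
  let ε : ZMod 2 × ℤ → ZMod 2 × ℤ → ZMod 2 := fun a b ↦ (a.2 : ZMod 2) * (b.1 + (b.2 : ZMod 2))
  have hε : ∀ a b c, ε (a + b) c + ε a b = ε a (b + c) + ε b c := by
    intro a b c
    simp only [ε, Prod.fst_add, Prod.snd_add, Int.cast_add]
    ring
  have ht : ∀ a b : ZMod 2 × ℤ, a.1 * b.1 + ((a.2 * b.2 : ℤ) : ZMod 2) + ε a b + ε b a
      = (a.1 + (a.2 : ZMod 2)) * (b.1 + (b.2 : ZMod 2)) := by
    intro a b
    push_cast [ε]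
    linear_combination (a.2 * b.2 : ZMod 2) * CharTwo.two_eq_zero (R := ZMod 2)
  refine ⟨fun a b x hx y hy ↦ twist_antisymm (hanti a b x hx y hy) (ht a b),
    fun a b c x hx y hy z hz ↦ ?_⟩
  simp only [map_smul, LinearMap.smul_apply]
  exact twist_jacobi hε (hjac a b c x hx y hy z hz) (ht a b)

/-- Lemma 1, second bracket: under the same hypotheses, the bracket
`{u,v}' = (-1)^{deg(u)(|v|+deg(v))}[u,v]` also satisfies graded antisymmetry and
the graded Jacobi identity with respect to `⟨(m̄,n),(m̄',n')⟩ = (m̄+n)(m̄'+n')`. -/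
theorem second_modified_bracket_graded_lie {k L : Type*} [Field k]
    [AddCommGroup L] [Module k L]
    (𝕃 : ZMod 2 × ℤ → Submodule k L)
    (B : L →ₗ[k] L →ₗ[k] L)
    (hgr : ∀ a b : ZMod 2 × ℤ, ∀ x ∈ 𝕃 a, ∀ y ∈ 𝕃 b, B x y ∈ 𝕃 (a + b))
    (hanti : ∀ a b : ZMod 2 × ℤ, ∀ x ∈ 𝕃 a, ∀ y ∈ 𝕃 b,
      B x y = - pSign k (a.1 * b.1 + ((a.2 * b.2 : ℤ) : ZMod 2)) • B y x)
    (hjac : ∀ a b c : ZMod 2 × ℤ, ∀ x ∈ 𝕃 a, ∀ y ∈ 𝕃 b, ∀ z ∈ 𝕃 c,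
      B (B x y) z = B x (B y z)
        - pSign k (a.1 * b.1 + ((a.2 * b.2 : ℤ) : ZMod 2)) • B y (B x z)) :
    (∀ a b : ZMod 2 × ℤ, ∀ x ∈ 𝕃 a, ∀ y ∈ 𝕃 b,
      pSign k ((a.2 : ZMod 2) * (b.1 + (b.2 : ZMod 2))) • B x y
        = - pSign k ((a.1 + (a.2 : ZMod 2)) * (b.1 + (b.2 : ZMod 2))) •
            (pSign k ((b.2 : ZMod 2) * (a.1 + (a.2 : ZMod 2))) • B y x)) ∧
    (∀ a b c : ZMod 2 × ℤ, ∀ x ∈ 𝕃 a, ∀ y ∈ 𝕃 b, ∀ z ∈ 𝕃 c,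
      pSign k (((a + b).2 : ZMod 2) * (c.1 + (c.2 : ZMod 2))) •
          B (pSign k ((a.2 : ZMod 2) * (b.1 + (b.2 : ZMod 2))) • B x y) z
        = pSign k ((a.2 : ZMod 2) * ((b + c).1 + ((b + c).2 : ZMod 2))) •
            B x (pSign k ((b.2 : ZMod 2) * (c.1 + (c.2 : ZMod 2))) • B y z)
          - pSign k ((a.1 + (a.2 : ZMod 2)) * (b.1 + (b.2 : ZMod 2))) •
            (pSign k ((b.2 : ZMod 2) * ((a + c).1 + ((a + c).2 : ZMod 2))) •
              B y (pSign k ((a.2 : ZMod 2) * (c.1 + (c.2 : ZMod 2))) • B x z))) :=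
  second_modified_bracket_graded_lie_general 𝕃 B hanti hjac
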